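/- The following hold: (i) ∫ 1/(d₊−x) dμ_MP(x) = r₁/(√r₂·(√r₁+√r₂)); (ii) with α = (r₁−r₂)/(2r₂) and s = r₁/(√r₂·(√r₁+√r₂)), one has d₊·s² + 2α·s = (r₁/r₂)^{3/2}; consequently B_c := √(d₊·s² + 2α·s) = (r₁/r₂)^{3/4}, and β_c := (√r₂/r₁)·B_c = (r₁r₂)^{−1/4}. -/

import Mathlib

/-!
Against the Marchenko–Pastur density, `1 / (d₊ - x)` is a constant multiple of
`√((d₊ - x)(x - d₋)) / (x (d₊ - x)) = 1 / √((d₊ - x)(x - d₋)) - d₋ / (x √((d₊ - x)(x - d₋)))`,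
and the two pieces have the primitives `arcsin ((2x - d₋ - d₊) / (d₊ - d₋))` and
`√(d₋ / d₊) · arcsin ((d₋ + d₊ - 2 d₋ d₊ / x) / (d₊ - d₋))`, so the integral over `(d₋, d₊)` is
`π (1 - √(d₋ / d₊))`. Writing `r₁ = u⁴`, `r₂ = v⁴` gives `√d₋ = (u² - v²) / u²`,
`√d₊ = (u² + v²) / u²` and `d₊ s² + 2 α s = (u / v)⁶`, after which every claim is an identity of
rational functions of `u` and `v`.
-/

open MeasureTheory

/-- The Marchenko–Pastur distribution with edges `d₋ < d₊`: the measure on `ℝ` with density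
`2√((d₊−x)(x−d₋)) / (π(√d₊−√d₋)²x)` on `(d₋, d₊)` and zero elsewhere. -/
noncomputable def mpMeasure (dm dp : ℝ) : Measure ℝ :=
  volume.withDensity (fun x => ENNReal.ofReal
    (if x ∈ Set.Ioo dm dp then
      2 * Real.sqrt ((dp - x) * (x - dm)) / (Real.pi * (Real.sqrt dp - Real.sqrt dm) ^ 2 * x)
    else 0))

open Real Set

lemma HasDerivAt.arcsin_of_one_sub_sq_eq {f : ℝ → ℝ} {f' w x : ℝ} (hf : HasDerivAt f f' x)
    (hw : 0 < w) (h : 1 - f x ^ 2 = w ^ 2) : HasDerivAt (fun y => arcsin (f y)) (f' / w) x := by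
  have hne : f x ≠ -1 ∧ f x ≠ 1 := by
    constructor <;> rintro hfx <;> rw [hfx] at h <;> nlinarith
  refine ((hasDerivAt_arcsin hne.1 hne.2).comp x hf).congr_deriv ?_
  rw [h, sqrt_sq hw.le]
  ring

variable {a b x : ℝ}

lemma hasDerivAt_arcsin_affine (hax : a < x) (hxb : x < b) :
    HasDerivAt (fun y => arcsin ((2 * y - a - b) / (b - a)))
      (1 / √((b - x) * (x - a))) x := by
  have hs : 0 < √((b - x) * (x - a)) := sqrt_pos.2 (by nlinarith)
  have hs2 : √((b - x) * (x - a)) ^ 2 = (b - x) * (x - a) := sq_sqrt (by nlinarith)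
  have hba : 0 < b - a := by linarith
  have hlin : HasDerivAt (fun y => (2 * y - a - b) / (b - a)) (2 / (b - a)) x := by
    simpa using ((((hasDerivAt_id x).const_mul 2).sub_const a).sub_const b).div_const (b - a)
  convert hlin.arcsin_of_one_sub_sq_eq (w := 2 * √((b - x) * (x - a)) / (b - a))
    (by positivity) (by field_simp; rw [hs2]; ring) using 1
  field_simp

lemma hasDerivAt_arcsin_affine_inv (ha : 0 < a) (hax : a < x) (hxb : x < b) :
    HasDerivAt (fun y => arcsin ((a + b - 2 * a * b / y) / (b - a)))
      (√a * √b / (x * √((b - x) * (x - a)))) x := by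
  have hx : 0 < x := ha.trans hax
  have hs : 0 < √((b - x) * (x - a)) := sqrt_pos.2 (by nlinarith)
  have hs2 : √((b - x) * (x - a)) ^ 2 = (b - x) * (x - a) := sq_sqrt (by nlinarith)
  have ha2 : √a ^ 2 = a := sq_sqrt ha.le
  have hb2 : √b ^ 2 = b := sq_sqrt (by linarith)
  have hb : 0 < √b := sqrt_pos.2 (by linarith)
  have hba : 0 < b - a := by linarith
  have hinner : HasDerivAt (fun y => (a + b - 2 * a * b / y) / (b - a))
      (2 * a * b / x ^ 2 / (b - a)) x := by
    refine ((((hasDerivAt_const x (2 * a * b)).div (hasDerivAt_id x) hx.ne').const_sub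
      (a + b)).div_const (b - a)).congr_deriv ?_
    simp only [id]
    ring
  convert hinner.arcsin_of_one_sub_sq_eq
    (w := 2 * √a * √b * √((b - x) * (x - a)) / (x * (b - a)))
    (by positivity) (by field_simp; rw [hs2, ha2, hb2]; ring) using 1
  field_simp
  rw [ha2, hb2, mul_comm]

lemma hasDerivAt_sqrt_div_mul_arcsin_affine_inv (ha : 0 ≤ a) (hax : a < x) (hxb : x < b) :
    HasDerivAt (fun y => √a / √b * arcsin ((a + b - 2 * a * b / y) / (b - a)))
      (a / (x * √((b - x) * (x - a)))) x := by
  rcases ha.eq_or_lt with rfl | ha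
  · simpa using hasDerivAt_const x (0 : ℝ)
  · have hb : 0 < √b := sqrt_pos.2 (by linarith)
    refine ((hasDerivAt_arcsin_affine_inv ha hax hxb).const_mul (√a / √b)).congr_deriv ?_
    field_simp
    rw [sq_sqrt ha.le]

noncomputable def mpPrimitive (a b x : ℝ) : ℝ :=
  arcsin ((2 * x - a - b) / (b - a)) - √a / √b * arcsin ((a + b - 2 * a * b / x) / (b - a))

lemma hasDerivAt_mpPrimitive (ha : 0 ≤ a) (hax : a < x) (hxb : x < b) :
    HasDerivAt (mpPrimitive a b) (√((b - x) * (x - a)) / (x * (b - x))) x := by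
  have hx : 0 < x := by linarith
  have hs : 0 < √((b - x) * (x - a)) := sqrt_pos.2 (by nlinarith)
  have hs2 : √((b - x) * (x - a)) ^ 2 = (b - x) * (x - a) := sq_sqrt (by nlinarith)
  have hbx : b - x ≠ 0 := by linarith
  refine ((hasDerivAt_arcsin_affine hax hxb).sub
    (hasDerivAt_sqrt_div_mul_arcsin_affine_inv ha hax hxb)).congr_deriv ?_
  field_simp
  linear_combination -hs2

lemma continuousOn_mpPrimitive (ha : 0 ≤ a) : ContinuousOn (mpPrimitive a b) (Icc a b) := by
  rcases ha.eq_or_lt with rfl | ha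
  · unfold mpPrimitive
    simp only [sqrt_zero, zero_div, zero_mul]
    fun_prop
  · refine (continuous_arcsin.comp (by fun_prop)).continuousOn.sub
      (continuousOn_const.mul (continuous_arcsin.comp_continuousOn ?_))
    exact ((continuousOn_const.sub (continuousOn_const.div continuousOn_id
      fun y hy => (ha.trans_le hy.1).ne')).div_const _)

lemma mpPrimitive_right (ha : 0 ≤ a) (hab : a < b) :
    mpPrimitive a b b = π / 2 * (1 - √a / √b) := by
  have hb : b ≠ 0 := by linarith
  have hba : b - a ≠ 0 := by linarith
  rw [mpPrimitive, show (2 * b - a - b) / (b - a) = 1 by field_simp; ring,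
    show (a + b - 2 * a * b / b) / (b - a) = 1 by field_simp; ring, arcsin_one]
  ring

lemma mpPrimitive_left (ha : 0 ≤ a) (hab : a < b) :
    mpPrimitive a b a = -(π / 2 * (1 - √a / √b)) := by
  have hba : b - a ≠ 0 := by linarith
  rcases ha.eq_or_lt with rfl | ha
  · rw [mpPrimitive, show (2 * 0 - 0 - b) / (b - 0) = -1 by field_simp; ring]
    simp
  · rw [mpPrimitive, show (2 * a - a - b) / (b - a) = -1 by field_simp; ring,
      show (a + b - 2 * a * b / a) / (b - a) = -1 by field_simp; ring, arcsin_neg_one]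
    ring

theorem integral_sqrt_mul_div_mul (ha : 0 ≤ a) (hab : a < b) :
    ∫ x in a..b, √((b - x) * (x - a)) / (x * (b - x)) = π * (1 - √a / √b) := by
  have hcont := continuousOn_mpPrimitive (b := b) ha
  have hderiv : ∀ x ∈ Ioo a b,
      HasDerivAt (mpPrimitive a b) (√((b - x) * (x - a)) / (x * (b - x))) x :=
    fun x hx => hasDerivAt_mpPrimitive ha hx.1 hx.2
  have hnonneg : ∀ x ∈ Ioo a b, 0 ≤ √((b - x) * (x - a)) / (x * (b - x)) := fun x hx =>
    div_nonneg (sqrt_nonneg _) (mul_nonneg (by linarith [hx.1]) (by linarith [hx.2]))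
  rw [intervalIntegral.integral_eq_sub_of_hasDerivAt_of_le hab.le hcont hderiv
    ((intervalIntegrable_iff_integrableOn_Ioc_of_le hab.le).2
      (intervalIntegral.integrableOn_deriv_of_nonneg hcont hderiv hnonneg)),
    mpPrimitive_right ha hab, mpPrimitive_left ha hab]
  ring

theorem integral_one_div_sub_mpMeasure (ha : 0 ≤ a) (hab : a < b) :
    ∫ x, 1 / (b - x) ∂mpMeasure a b = 2 / (√b * (√b - √a)) := by
  have hsqrt : √a < √b := sqrt_lt_sqrt ha hab
  have hb : 0 < √b := sqrt_pos.2 (ha.trans_lt hab)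
  have hdensity : ∀ x, (ENNReal.ofReal (if x ∈ Ioo a b then
      2 * √((b - x) * (x - a)) / (π * (√b - √a) ^ 2 * x) else 0)).toReal • (1 / (b - x)) =
      (Ioo a b).indicator
        (fun x => 2 / (π * (√b - √a) ^ 2) * (√((b - x) * (x - a)) / (x * (b - x)))) x := by
    intro x
    by_cases hx : x ∈ Ioo a b
    · have hx0 : 0 < x := ha.trans_lt hx.1
      have hbx : b - x ≠ 0 := (sub_pos.2 hx.2).ne'
      have hba : √b - √a ≠ 0 := (sub_pos.2 hsqrt).ne'
      rw [if_pos hx, indicator_of_mem hx, ENNReal.toReal_ofReal (by positivity), smul_eq_mul]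
      field_simp
    · simp [hx]
  have hmeas : Measurable fun x => ENNReal.ofReal (if x ∈ Ioo a b then
      2 * √((b - x) * (x - a)) / (π * (√b - √a) ^ 2 * x) else 0) :=
    (Measurable.ite measurableSet_Ioo (by fun_prop) measurable_const).ennreal_ofReal
  rw [mpMeasure, integral_withDensity_eq_integral_toReal_smul hmeas
    (.of_forall fun _ => ENNReal.ofReal_lt_top)]
  simp only [hdensity]
  rw [integral_indicator measurableSet_Ioo, ← integral_Ioc_eq_integral_Ioo,
    ← intervalIntegral.integral_of_le hab.le, intervalIntegral.integral_const_mul,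
    integral_sqrt_mul_div_mul ha hab]
  field_simp

lemma pow_rpow_eq_zpow {x e : ℝ} (hx : 0 ≤ x) (n : ℕ) {k : ℤ} (h : n * e = k) :
    (x ^ n) ^ e = x ^ k := by
  rw [← rpow_natCast_mul hx, h, rpow_intCast]

lemma exists_pos_eq_pow {r : ℝ} (hr : 0 < r) {n : ℕ} (hn : n ≠ 0) : ∃ u, 0 < u ∧ r = u ^ n :=
  ⟨r ^ (n⁻¹ : ℝ), rpow_pos_of_pos hr _, (rpow_inv_natCast_pow hr.le hn).symm⟩

lemma sqrt_pow_four (x : ℝ) : √(x ^ 4) = x ^ 2 := by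
  rw [show x ^ 4 = (x ^ 2) ^ 2 by ring, sqrt_sq (sq_nonneg x)]

lemma sqrt_sq_div_pow_four {c : ℝ} (hc : 0 ≤ c) (u : ℝ) : √(c ^ 2 / u ^ 4) = c / u ^ 2 := by
  rw [show c ^ 2 / u ^ 4 = (c / u ^ 2) ^ 2 by ring, sqrt_sq (by positivity)]

theorem stmt_19_general (r₁ r₂ : ℝ) (hr₂ : 0 < r₂) (hr : r₂ ≤ r₁)
    (dm dp : ℝ)
    (hdm : dm = (Real.sqrt r₁ - Real.sqrt r₂) ^ 2 / r₁)
    (hdp : dp = (Real.sqrt r₁ + Real.sqrt r₂) ^ 2 / r₁)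
    (α s : ℝ)
    (hα : α = (r₁ - r₂) / (2 * r₂))
    (hs : s = r₁ / (Real.sqrt r₂ * (Real.sqrt r₁ + Real.sqrt r₂))) :
    (∫ x, 1 / (dp - x) ∂(mpMeasure dm dp)
        = r₁ / (Real.sqrt r₂ * (Real.sqrt r₁ + Real.sqrt r₂))) ∧
    dp * s ^ 2 + 2 * α * s = (r₁ / r₂) ^ ((3:ℝ)/2) ∧
    Real.sqrt (dp * s ^ 2 + 2 * α * s) = (r₁ / r₂) ^ ((3:ℝ)/4) ∧
    (Real.sqrt r₂ / r₁) * Real.sqrt (dp * s ^ 2 + 2 * α * s) = (r₁ * r₂) ^ (-(1:ℝ)/4) := by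
  obtain ⟨u, hu, rfl⟩ := exists_pos_eq_pow (hr₂.trans_le hr) four_ne_zero
  obtain ⟨v, hv, rfl⟩ := exists_pos_eq_pow hr₂ four_ne_zero
  simp only [sqrt_pow_four] at hdm hdp hs ⊢
  have hB : dp * s ^ 2 + 2 * α * s = ((u / v) ^ 3) ^ 2 := by
    rw [hdp, hα, hs]
    field_simp
    ring
  refine ⟨?_, ?_, ?_, ?_⟩
  · have hvu : v ^ 2 ≤ u ^ 2 := by nlinarith
    have hdm_lt_dp : dm < dp := by
      rw [hdm, hdp]
      gcongr
      linarith [pow_pos hv 2]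
    rw [integral_one_div_sub_mpMeasure (by rw [hdm]; positivity) hdm_lt_dp, hdm, hdp,
      sqrt_sq_div_pow_four (sub_nonneg.2 hvu), sqrt_sq_div_pow_four (by positivity)]
    field_simp
    ring
  · rw [hB, ← div_pow, pow_rpow_eq_zpow (by positivity) 4 (k := 6) (by norm_num), ← pow_mul]
    norm_cast
  · rw [hB, sqrt_sq (by positivity), ← div_pow,
      pow_rpow_eq_zpow (by positivity) 4 (k := 3) (by norm_num)]
    rfl
  · rw [hB, sqrt_sq (by positivity), ← mul_pow,
      pow_rpow_eq_zpow (by positivity) 4 (k := -1) (by norm_num), zpow_neg_one]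
    field_simp

theorem stmt_19 (r₁ r₂ : ℝ) (hr₂ : 0 < r₂) (hr : r₂ ≤ r₁) (hsum : r₁ + r₂ = 1)
    (dm dp : ℝ)
    (hdm : dm = (Real.sqrt r₁ - Real.sqrt r₂) ^ 2 / r₁)
    (hdp : dp = (Real.sqrt r₁ + Real.sqrt r₂) ^ 2 / r₁)
    (α s : ℝ)
    (hα : α = (r₁ - r₂) / (2 * r₂))
    (hs : s = r₁ / (Real.sqrt r₂ * (Real.sqrt r₁ + Real.sqrt r₂))) :
    (∫ x, 1 / (dp - x) ∂(mpMeasure dm dp)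
        = r₁ / (Real.sqrt r₂ * (Real.sqrt r₁ + Real.sqrt r₂))) ∧
    dp * s ^ 2 + 2 * α * s = (r₁ / r₂) ^ ((3:ℝ)/2) ∧
    Real.sqrt (dp * s ^ 2 + 2 * α * s) = (r₁ / r₂) ^ ((3:ℝ)/4) ∧
    (Real.sqrt r₂ / r₁) * Real.sqrt (dp * s ^ 2 + 2 * α * s) = (r₁ * r₂) ^ (-(1:ℝ)/4) :=
  stmt_19_general r₁ r₂ hr₂ hr dm dp hdm hdp α s hα hs
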